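/- The strong-force collinear potential U(ξ₁,ξ₂,ξ₃) = Σ_{1≤i<j≤3}[(ξᵢ−ξⱼ)^{-2} + (ξᵢ+ξⱼ)^{-2}] satisfies ΔU-convexity of its logarithm: Δ log U > 0 at every point where all ξᵢ ± ξⱼ ≠ 0, where Δ = ∂₁² + ∂₂² + ∂₃² is the Euclidean Laplacian. -/

import Mathlib

/-- The strong-force collinear potential in the coordinates `ξ₁, ξ₂, ξ₃`. -/
noncomputable def Ucol (a b c : ℝ) : ℝ :=
  1 / (a - b) ^ 2 + 1 / (a + b) ^ 2 + 1 / (a - c) ^ 2 + 1 / (a + c) ^ 2 +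
    1 / (b - c) ^ 2 + 1 / (b + c) ^ 2

/-- The Euclidean Laplacian of a function of three real variables. -/
noncomputable def lap3 (g : ℝ → ℝ → ℝ → ℝ) (a b c : ℝ) : ℝ :=
  deriv (fun t => deriv (fun s => g s b c) t) a +
    deriv (fun t => deriv (fun s => g a s c) t) b +
    deriv (fun t => deriv (fun s => g a b s) t) c

/-!
In each variable separately `U` has the form `C + ∑ₖ xₖ²` with `C ≥ 0` and `xₖ = 1 / (t - eₖ)`,
so `U' = -2 ∑ xₖ³` and `U'' = 6 ∑ xₖ⁴`. Cauchy–Schwarz gives `(∑ xₖ³)² ≤ ∑ xₖ² ∑ xₖ⁴ ≤ U ∑ xₖ⁴`,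
hence `U U'' - U'² ≥ 2 U ∑ xₖ⁴ > 0`: `log U` is strictly convex in each variable, and the three
pure second derivatives in the Laplacian are all positive. Since `U` is symmetric, it suffices to
treat the first variable.
-/

open Real Filter Topology Finset

lemma deriv_deriv_log_eq {f f' : ℝ → ℝ} {f'' x : ℝ}
    (hf : ∀ᶠ y in 𝓝 x, HasDerivAt f (f' y) y) (hf' : HasDerivAt f' f'' x) (hx : f x ≠ 0) :
    deriv (deriv fun y => log (f y)) x = (f'' * f x - f' x * f' x) / f x ^ 2 := by
  have hlog : deriv (fun y => log (f y)) =ᶠ[𝓝 x] fun y => f' y / f y := by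
    filter_upwards [hf, hf.self_of_nhds.continuousAt.eventually_ne hx] with y hy hy0
    exact (hy.log hy0).deriv
  rw [hlog.deriv_eq]
  exact (hf'.div hf.self_of_nhds hx).deriv

lemma hasDerivAt_div_sub_pow (c e : ℝ) (n : ℕ) {y : ℝ} (hy : y ≠ e) :
    HasDerivAt (fun t => c / (t - e) ^ n) (-(n * c) / (y - e) ^ (n + 1)) y := by
  have hy' : y - e ≠ 0 := sub_ne_zero.2 hy
  refine ((hasDerivAt_const y c).div (((hasDerivAt_id y).sub_const e).fun_pow n)
    (pow_ne_zero n hy')).congr_deriv ?_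
  rcases n with _ | n
  · simp
  · simp only [id, Nat.add_sub_cancel]
    field_simp
    ring

section InverseSquareSum

variable {ι : Type*} (s : Finset ι) (e : ι → ℝ) (C : ℝ) {y : ℝ}

lemma hasDerivAt_add_sum_inv_sq (hy : ∀ k ∈ s, y ≠ e k) :
    HasDerivAt (fun t => C + ∑ k ∈ s, 1 / (t - e k) ^ 2) (∑ k ∈ s, -2 / (y - e k) ^ 3) y := by
  refine (HasDerivAt.fun_sum fun k hk => ?_).const_add C
  exact (hasDerivAt_div_sub_pow 1 (e k) 2 (hy k hk)).congr_deriv (by norm_num)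

lemma hasDerivAt_sum_inv_cube (hy : ∀ k ∈ s, y ≠ e k) :
    HasDerivAt (fun t => ∑ k ∈ s, -2 / (t - e k) ^ 3) (∑ k ∈ s, 6 / (y - e k) ^ 4) y := by
  refine HasDerivAt.fun_sum fun k hk => ?_
  exact (hasDerivAt_div_sub_pow (-2) (e k) 3 (hy k hk)).congr_deriv (by norm_num)

lemma sq_sum_cube_le (x : ι → ℝ) :
    (∑ k ∈ s, x k ^ 3) ^ 2 ≤ (∑ k ∈ s, x k ^ 2) * ∑ k ∈ s, x k ^ 4 := by
  calc (∑ k ∈ s, x k ^ 3) ^ 2 = (∑ k ∈ s, x k * x k ^ 2) ^ 2 := by simp only [← pow_succ']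
    _ ≤ (∑ k ∈ s, x k ^ 2) * ∑ k ∈ s, (x k ^ 2) ^ 2 := sum_mul_sq_le_sq_mul_sq s x fun k => x k ^ 2
    _ = (∑ k ∈ s, x k ^ 2) * ∑ k ∈ s, x k ^ 4 := by simp only [← pow_mul]

theorem deriv_deriv_log_add_sum_inv_sq_pos (hC : 0 ≤ C) (hs : s.Nonempty)
    (hy : ∀ k ∈ s, y ≠ e k) :
    0 < deriv (deriv fun t => log (C + ∑ k ∈ s, 1 / (t - e k) ^ 2)) y := by
  set x : ι → ℝ := fun k => (y - e k)⁻¹ with hx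
  have hx0 : ∀ k ∈ s, x k ≠ 0 := fun k hk => inv_ne_zero (sub_ne_zero.2 (hy k hk))
  have hS2 : 0 < ∑ k ∈ s, x k ^ 2 := sum_pos (fun k hk => even_two.pow_pos (hx0 k hk)) hs
  have hS4 : 0 < ∑ k ∈ s, x k ^ 4 := sum_pos (fun k hk => (even_two_mul 2).pow_pos (hx0 k hk)) hs
  have hF : C + ∑ k ∈ s, 1 / (y - e k) ^ 2 = C + ∑ k ∈ s, x k ^ 2 := by simp [hx]
  have hFpos : 0 < C + ∑ k ∈ s, x k ^ 2 := by linarith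
  have hnear : ∀ᶠ t in 𝓝 y, ∀ k ∈ s, t ≠ e k :=
    (eventually_all_finset s).2 fun k hk => eventually_ne_nhds (hy k hk)
  rw [deriv_deriv_log_eq (hnear.mono fun t ht => hasDerivAt_add_sum_inv_sq s e C ht)
    (hasDerivAt_sum_inv_cube s e hy) (hF ▸ hFpos.ne')]
  have h3 : ∑ k ∈ s, -2 / (y - e k) ^ 3 = -2 * ∑ k ∈ s, x k ^ 3 := by
    simp [hx, mul_sum, div_eq_mul_inv]
  have h4 : ∑ k ∈ s, 6 / (y - e k) ^ 4 = 6 * ∑ k ∈ s, x k ^ 4 := by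
    simp [hx, mul_sum, div_eq_mul_inv]
  rw [hF, h3, h4]
  refine div_pos ?_ (pow_pos hFpos 2)
  nlinarith [sq_sum_cube_le s x, mul_nonneg hC hS4.le, mul_pos hFpos hS4]

end InverseSquareSum

lemma Ucol_comm (a b c : ℝ) : Ucol a b c = Ucol b a c := by
  have hsq (p q : ℝ) : (p - q) ^ 2 = (q - p) ^ 2 := by ring
  simp only [Ucol, hsq a, add_comm a]
  ring

lemma Ucol_rotate (a b c : ℝ) : Ucol a b c = Ucol c a b := by
  have hsq (p q : ℝ) : (p - q) ^ 2 = (q - p) ^ 2 := by ring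
  simp only [Ucol, hsq a c, hsq b c, add_comm a c, add_comm b c]
  ring

lemma Ucol_eq_add_sum (a b c : ℝ) :
    Ucol a b c = (1 / (b - c) ^ 2 + 1 / (b + c) ^ 2) + ∑ k, 1 / (a - ![b, -b, c, -c] k) ^ 2 := by
  simp only [Ucol, Fin.sum_univ_four, Matrix.cons_val, sub_neg_eq_add]
  ring

theorem deriv_deriv_log_Ucol_pos {a b c : ℝ} (h1 : a - b ≠ 0) (h2 : a + b ≠ 0) (h3 : a - c ≠ 0)
    (h4 : a + c ≠ 0) : 0 < deriv (fun t => deriv (fun s => log (Ucol s b c)) t) a := by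
  simp only [Ucol_eq_add_sum _ b c]
  refine deriv_deriv_log_add_sum_inv_sq_pos _ _ _ (by positivity) univ_nonempty ?_
  rw [sub_ne_zero] at h1 h3
  rw [← sub_neg_eq_add, sub_ne_zero] at h2 h4
  simp [Fin.forall_fin_succ, h1, h2, h3, h4]

theorem laplacian_log_Ucol_pos (ξ₁ ξ₂ ξ₃ : ℝ)
    (h1 : ξ₁ - ξ₂ ≠ 0) (h2 : ξ₁ + ξ₂ ≠ 0) (h3 : ξ₁ - ξ₃ ≠ 0) (h4 : ξ₁ + ξ₃ ≠ 0)
    (h5 : ξ₂ - ξ₃ ≠ 0) (h6 : ξ₂ + ξ₃ ≠ 0) :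
    0 < lap3 (fun a b c => Real.log (Ucol a b c)) ξ₁ ξ₂ ξ₃ := by
  simp only [lap3, Ucol_comm ξ₁ _ ξ₃, Ucol_rotate ξ₁ ξ₂]
  have h1' : ξ₂ - ξ₁ ≠ 0 := fun h => h1 (by linarith)
  have h3' : ξ₃ - ξ₁ ≠ 0 := fun h => h3 (by linarith)
  have h5' : ξ₃ - ξ₂ ≠ 0 := fun h => h5 (by linarith)
  exact add_pos (add_pos (deriv_deriv_log_Ucol_pos h1 h2 h3 h4)
    (deriv_deriv_log_Ucol_pos h1' (add_comm ξ₁ ξ₂ ▸ h2) h5 h6))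
    (deriv_deriv_log_Ucol_pos h3' (add_comm ξ₁ ξ₃ ▸ h4) h5' (add_comm ξ₂ ξ₃ ▸ h6))
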